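/- arXiv:1807.00396 — 6 statements merged into one kernel-verified Lean document; each statement's English description precedes it below -/
import Mathlib

section
/- Let k ≥ 1 be a natural number, let Q be an invertible symmetric real (k+1)×(k+1) matrix, and let q be a polynomial in two real variables with total degree strictly less than 2k. Define g : (Fin 2 → ℝ) → ℝ by g(x) = vₖ(x) ⬝ᵥ ((Q * Q) *ᵥ vₖ(x)) + eval x q, where the leading part is the quadratic form of the matrix Q² in the Veronese coordinates vₖ(x). Then the zero level set {x : Fin 2 → ℝ | g x = 0} is bounded. -/
open MvPolynomial Matrix

/-- The degree-`k` Veronese map: `vₖ(x) j = (x 0)^(k - j) * (x 1)^j`. -/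
noncomputable def veronese (k : ℕ) (x : Fin 2 → ℝ) : Fin (k + 1) → ℝ :=
  fun j => (x 0) ^ (k - (j : ℕ)) * (x 1) ^ (j : ℕ)

lemma aux_poly_bound (q : MvPolynomial (Fin 2) ℝ) :
    ∃ D : ℝ, 0 ≤ D ∧ ∀ x : Fin 2 → ℝ, 1 ≤ ‖x‖ →
      |eval x q| ≤ D * ‖x‖ ^ q.totalDegree := by
  refine ⟨∑ m ∈ q.support, |coeff m q|,
    Finset.sum_nonneg fun _ _ => abs_nonneg _, fun x hx => ?_⟩
  rw [eval_eq', Finset.sum_mul]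
  refine (Finset.abs_sum_le_sum_abs _ _).trans (Finset.sum_le_sum fun m hm => ?_)
  rw [abs_mul]
  refine mul_le_mul_of_nonneg_left ?_ (abs_nonneg _)
  calc |∏ i, x i ^ m i| = ∏ i, |x i| ^ m i := by
        rw [Finset.abs_prod]; simp [abs_pow]
    _ ≤ ∏ i, ‖x‖ ^ m i := Finset.prod_le_prod (fun i _ => by positivity)
        (fun i _ => pow_le_pow_left₀ (abs_nonneg _) (by simpa using norm_le_pi_norm x i) _)
    _ = ‖x‖ ^ (∑ i, m i) := by rw [Finset.prod_pow_eq_pow_sum]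
    _ ≤ ‖x‖ ^ q.totalDegree := pow_le_pow_right₀ hx (by
        have := le_totalDegree hm
        rwa [Finsupp.sum_fintype _ _ (fun _ => rfl)] at this)

theorem bounded_zero_set_of_nonsingular_leading_form
    (k : ℕ) (hk : 1 ≤ k)
    (Q : Matrix (Fin (k + 1)) (Fin (k + 1)) ℝ)
    (hQsymm : Q.IsSymm) (hQinv : IsUnit Q)
    (q : MvPolynomial (Fin 2) ℝ) (hq : q.totalDegree < 2 * k)
    (g : (Fin 2 → ℝ) → ℝ)
    (hg : ∀ x, g x =
      veronese k x ⬝ᵥ ((Q * Q) *ᵥ veronese k x) + eval x q) :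
    Bornology.IsBounded {x : Fin 2 → ℝ | g x = 0} := by
  obtain ⟨u, hu⟩ := hQinv
  set B : Matrix (Fin (k + 1)) (Fin (k + 1)) ℝ := ↑u⁻¹ with hB
  have hBQ : B * Q = 1 := by rw [hB, ← hu]; exact u.inv_mul
  set f := (Matrix.toLin' B).toContinuousLinearMap with hf
  set C : ℝ := ‖f‖ + 1 with hC
  have hC1 : (1:ℝ) ≤ C := by rw [hC]; linarith [norm_nonneg f]
  have hC0 : (0:ℝ) < C := lt_of_lt_of_le one_pos hC1
  have hBv : ∀ w : Fin (k + 1) → ℝ, ‖B *ᵥ w‖ ≤ C * ‖w‖ := by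
    intro w
    calc ‖B *ᵥ w‖ = ‖f w‖ := by
          rw [hf]; simp [Matrix.toLin'_apply]
      _ ≤ ‖f‖ * ‖w‖ := f.le_opNorm w
      _ ≤ C * ‖w‖ := by
          have := norm_nonneg w; nlinarith [norm_nonneg f]
  obtain ⟨D, hD0, hD⟩ := aux_poly_bound q
  -- key lower bound for leading form
  have key : ∀ x : Fin 2 → ℝ,
      ‖x‖ ^ (2 * k) ≤ C ^ 2 * (veronese k x ⬝ᵥ ((Q * Q) *ᵥ veronese k x)) := by
    intro x
    set v := veronese k x with hv
    set w := Q *ᵥ v with hw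
    have hsv : v ᵥ* Q = Q *ᵥ v := by
      conv_lhs => rw [← hQsymm]
      rw [vecMul_transpose]
    have hL : v ⬝ᵥ ((Q * Q) *ᵥ v) = w ⬝ᵥ w := by
      rw [← mulVec_mulVec, dotProduct_mulVec, hsv, hw]
    have hdot : w ⬝ᵥ w = ∑ i, w i * w i := rfl
    have h1 : (0:ℝ) ≤ w ⬝ᵥ w := by
      rw [hdot]; exact Finset.sum_nonneg fun i _ => mul_self_nonneg _
    have hww : ‖w‖ ^ 2 ≤ w ⬝ᵥ w := by
      have h2 : ‖w‖ ≤ Real.sqrt (w ⬝ᵥ w) := by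
        refine (pi_norm_le_iff_of_nonneg (Real.sqrt_nonneg _)).mpr fun i => ?_
        have h3 : (w i) ^ 2 ≤ w ⬝ᵥ w := by
          rw [hdot]
          simpa [sq] using Finset.single_le_sum (f := fun j => w j * w j)
            (fun j _ => mul_self_nonneg _) (Finset.mem_univ i)
        calc ‖w i‖ = Real.sqrt ((w i) ^ 2) := by
              rw [Real.sqrt_sq_eq_abs, Real.norm_eq_abs]
          _ ≤ Real.sqrt (w ⬝ᵥ w) := Real.sqrt_le_sqrt h3
      calc ‖w‖ ^ 2 ≤ (Real.sqrt (w ⬝ᵥ w)) ^ 2 := pow_le_pow_left₀ (norm_nonneg _) h2 2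
        _ = w ⬝ᵥ w := Real.sq_sqrt h1
    have hvw : v = B *ᵥ w := by
      rw [hw, mulVec_mulVec, hBQ, one_mulVec]
    have hvC : ‖v‖ ≤ C * ‖w‖ := hvw ▸ hBv w
    have hxv : ‖x‖ ^ k ≤ ‖v‖ := by
      rcases le_total |x 1| |x 0| with h | h
      · have hx0 : ‖x‖ ≤ |x 0| := by
          refine (pi_norm_le_iff_of_nonneg (abs_nonneg _)).mpr fun i => ?_
          fin_cases i <;> simp [h]
        calc ‖x‖ ^ k ≤ |x 0| ^ k := pow_le_pow_left₀ (norm_nonneg x) hx0 k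
          _ = |v 0| := by simp [hv, veronese, abs_pow]
          _ ≤ ‖v‖ := by simpa using norm_le_pi_norm v 0
      · have hx1 : ‖x‖ ≤ |x 1| := by
          refine (pi_norm_le_iff_of_nonneg (abs_nonneg _)).mpr fun i => ?_
          fin_cases i <;> simp [h]
        calc ‖x‖ ^ k ≤ |x 1| ^ k := pow_le_pow_left₀ (norm_nonneg x) hx1 k
          _ = |v (Fin.last k)| := by simp [hv, veronese, abs_pow]
          _ ≤ ‖v‖ := by simpa using norm_le_pi_norm v (Fin.last k)
    have hxCw : ‖x‖ ^ k ≤ C * ‖w‖ := hxv.trans hvC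
    have hsq : (‖x‖ ^ k) ^ 2 ≤ (C * ‖w‖) ^ 2 :=
      pow_le_pow_left₀ (by positivity) hxCw 2
    calc ‖x‖ ^ (2 * k) = (‖x‖ ^ k) ^ 2 := by rw [← pow_mul, mul_comm]
      _ ≤ (C * ‖w‖) ^ 2 := hsq
      _ = C ^ 2 * ‖w‖ ^ 2 := by ring
      _ ≤ C ^ 2 * (w ⬝ᵥ w) := by nlinarith
      _ = C ^ 2 * (v ⬝ᵥ ((Q * Q) *ᵥ v)) := by rw [hL]
  -- bound the zero set
  set R : ℝ := max 1 (C ^ 2 * D) + 1 with hR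
  have hsub : {x : Fin 2 → ℝ | g x = 0} ⊆ Metric.closedBall 0 R := by
    intro x hx
    simp only [Metric.mem_closedBall, dist_zero_right]
    by_contra hxR
    push_neg at hxR
    have hs1 : (1:ℝ) ≤ ‖x‖ := by
      have h1R : (1:ℝ) ≤ R := by
        rw [hR]; have := le_max_left (1:ℝ) (C ^ 2 * D); linarith
      linarith
    have hsCD : C ^ 2 * D + 1 ≤ ‖x‖ := by
      have h2R : C ^ 2 * D + 1 ≤ R := by
        rw [hR]; have := le_max_right (1:ℝ) (C ^ 2 * D); linarith
      linarith
    obtain ⟨t, ht⟩ : ∃ t, 2 * k = t + 1 :=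
      ⟨2 * k - 1, by omega⟩
    have hqd : q.totalDegree ≤ t := by omega
    have heval : |eval x q| ≤ D * ‖x‖ ^ t := by
      refine (hD x hs1).trans ?_
      exact mul_le_mul_of_nonneg_left (pow_le_pow_right₀ hs1 hqd) hD0
    have hpow : ‖x‖ ^ (2 * k) = ‖x‖ ^ t * ‖x‖ := by rw [ht, pow_succ]
    have hkey := key x
    rw [hpow] at hkey
    have hgx : g x = 0 := hx
    rw [hg x] at hgx
    have ht1 : (1:ℝ) ≤ ‖x‖ ^ t := one_le_pow₀ hs1
    have habs : -(D * ‖x‖ ^ t) ≤ eval x q := neg_le_of_abs_le heval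
    nlinarith [sq_nonneg C, mul_le_mul_of_nonneg_left hsCD (le_of_lt (pow_pos hC0 2))]
  exact Metric.isBounded_closedBall.subset hsub
end

section
/- Let F be a nonzero homogeneous polynomial of odd degree d in two real variables (F : MvPolynomial (Fin 2) ℝ, F.IsHomogeneous d, Odd d, F ≠ 0). Then for every real number c, the level set {x : Fin 2 → ℝ | eval x F = c} is unbounded. -/
open MvPolynomial

lemma my_eval_smul {d : ℕ} {F : MvPolynomial (Fin 2) ℝ} (hF : F.IsHomogeneous d)
    (t : ℝ) (x : Fin 2 → ℝ) : eval (t • x) F = t ^ d * eval x F := by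
  rw [eval_eq', eval_eq', Finset.mul_sum]
  refine Finset.sum_congr rfl fun m hm => ?_
  have hdeg : ∑ i, m i = d := by
    have h := hF (mem_support_iff.mp hm)
    rw [Finsupp.weight_apply] at h
    rw [← h, Finsupp.sum_fintype]
    · simp
    · simp
  calc coeff m F * ∏ i, (t • x) i ^ m i
      = coeff m F * ∏ i, (t ^ m i * x i ^ m i) := by
        simp [mul_pow]
    _ = coeff m F * ((∏ i, t ^ m i) * ∏ i, x i ^ m i) := by rw [Finset.prod_mul_distrib]
    _ = t ^ d * (coeff m F * ∏ i, x i ^ m i) := by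
        rw [Finset.prod_pow_eq_pow_sum, hdeg]; ring

theorem odd_degree_form_level_sets_unbounded
    (d : ℕ) (F : MvPolynomial (Fin 2) ℝ)
    (hF : F.IsHomogeneous d) (hd : Odd d) (hF0 : F ≠ 0) :
    ∀ c : ℝ, ¬ Bornology.IsBounded {x : Fin 2 → ℝ | eval x F = c} := by
  intro c hbdd
  have hd1 : 1 ≤ d := hd.pos
  obtain ⟨x0, hx0⟩ : ∃ x, eval x F ≠ 0 := by
    by_contra h
    push_neg at h
    exact hF0 (MvPolynomial.funext fun x => by simp [h x])
  obtain ⟨v, hv⟩ : ∃ v : Fin 2 → ℝ, 0 < eval v F := by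
    rcases lt_or_gt_of_ne hx0 with h | h
    · refine ⟨(-1 : ℝ) • x0, ?_⟩
      rw [my_eval_smul hF, hd.neg_one_pow]
      linarith
    · exact ⟨x0, h⟩
  have hv0 : v ≠ 0 := by
    intro h
    have h0 : eval ((0:ℝ) • v) F = 0 ^ d * eval v F := my_eval_smul hF 0 v
    rw [zero_pow (by omega), zero_mul, zero_smul] at h0
    rw [h, ← h0] at hv
    exact lt_irrefl _ hv
  have hnv : 0 < ‖v‖ := norm_pos_iff.mpr hv0
  rw [isBounded_iff_forall_norm_le] at hbdd
  obtain ⟨M, hM⟩ := hbdd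
  set t : ℝ := max 1 (max ((M + 1) / ‖v‖) (|c| / eval v F)) with ht
  have ht1 : 1 ≤ t := le_max_left _ _
  have htpos : 0 < t := lt_of_lt_of_le one_pos ht1
  have htM : (M + 1) / ‖v‖ ≤ t := le_trans (le_max_left _ _) (le_max_right _ _)
  have htc : |c| / eval v F ≤ t := le_trans (le_max_right _ _) (le_max_right _ _)
  have htd : t ≤ t ^ d := le_self_pow₀ ht1 (by omega)
  have hcle : |c| ≤ t ^ d * eval v F := by
    have : |c| ≤ t * eval v F := by
      rw [div_le_iff₀ hv] at htc; linarith
    nlinarith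
  have hr0 : (0:ℝ) ≤ t * ‖v‖ := by positivity
  have hconn : IsPreconnected (Metric.sphere (0 : Fin 2 → ℝ) (t * ‖v‖)) :=
    (isConnected_sphere (by rw [rank_fin_fun]; norm_num) 0 hr0).isPreconnected
  have hmem : ∀ s : ℝ, |s| = t → s • v ∈ Metric.sphere (0 : Fin 2 → ℝ) (t * ‖v‖) := by
    intro s hs
    simp [mem_sphere_iff_norm, norm_smul, hs]
  have ha : (-t) • v ∈ Metric.sphere (0 : Fin 2 → ℝ) (t * ‖v‖) := hmem _ (by rw [abs_neg, abs_of_pos htpos])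
  have hb : t • v ∈ Metric.sphere (0 : Fin 2 → ℝ) (t * ‖v‖) := hmem _ (abs_of_pos htpos)
  have hcont : ContinuousOn (fun x => eval x F) (Metric.sphere (0 : Fin 2 → ℝ) (t * ‖v‖)) :=
    (MvPolynomial.continuous_eval F).continuousOn
  have hIcc : c ∈ Set.Icc (eval ((-t) • v) F) (eval (t • v) F) := by
    rw [my_eval_smul hF, my_eval_smul hF, Odd.neg_pow hd]
    constructor
    · have := neg_abs_le c; nlinarith
    · have := le_abs_self c; nlinarith
  obtain ⟨x, hxs, hxc⟩ := hconn.intermediate_value ha hb hcont hIcc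
  have hxM : ‖x‖ ≤ M := hM x hxc
  have : ‖x‖ = t * ‖v‖ := by simpa [mem_sphere_iff_norm] using hxs
  have : M + 1 ≤ t * ‖v‖ := by
    rw [div_le_iff₀ hnv] at htM; linarith
  linarith
end

section
/- Let p be a polynomial in two real variables whose total degree is odd (p : MvPolynomial (Fin 2) ℝ with Odd p.totalDegree). Then the real zero set {x : Fin 2 → ℝ | eval x p = 0} is unbounded. In particular, the minimal polynomial defining the boundary of a bounded algebraic domain necessarily has even degree. -/
/-!
Let `d` be the (odd) degree of `p` and pick `u` where the leading form `p_d` does not vanish.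
Along the line `t ↦ t • u`, `p` is a one-variable polynomial of degree `d` with leading coefficient
`p_d(u)`, so `p(t • u)` and `p(-(t • u))` have opposite signs for all large `t`. Both points lie on
the sphere of radius `‖t • u‖`, which is connected in dimension two, so `p` vanishes somewhere on it.
-/

open MvPolynomial Filter Bornology

namespace MvPolynomial

variable {σ R : Type*} [CommSemiring R]

lemma homogeneousComponent_totalDegree_ne_zero {p : MvPolynomial σ R} (hp : p ≠ 0) :
    homogeneousComponent p.totalDegree p ≠ 0 := by
  obtain ⟨m, hm, hdeg⟩ :=
    Finset.exists_mem_eq_sup p.support (support_nonempty.2 hp) Finsupp.degree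
  intro h
  have := congr_arg (coeff m) h
  rw [coeff_homogeneousComponent, if_pos (by exact hdeg.symm), coeff_zero] at this
  exact mem_support_iff.1 hm this

noncomputable def restrictLine (u : σ → R) : MvPolynomial σ R →ₐ[R] Polynomial R :=
  aeval fun i => Polynomial.C (u i) * Polynomial.X

lemma eval_restrictLine (u : σ → R) (p : MvPolynomial σ R) (t : R) :
    (restrictLine u p).eval t = eval (t • u) p := by
  induction p using MvPolynomial.induction_on with
  | C a => simp [restrictLine]
  | add f g hf hg => simp [hf, hg]
  | mul_X f n hf =>
    rw [map_mul, Polynomial.eval_mul, hf]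
    simp only [restrictLine, aeval_X, Polynomial.eval_mul, Polynomial.eval_C, Polynomial.eval_X,
      map_mul, eval_X, Pi.smul_apply, smul_eq_mul]
    ring

lemma restrictLine_monomial (u : σ → R) (m : σ →₀ ℕ) (c : R) :
    restrictLine u (monomial m c) =
      Polynomial.C (eval u (monomial m c)) * Polynomial.X ^ m.degree := by
  simp [restrictLine, aeval_monomial, eval_monomial, Finsupp.prod, mul_pow, mul_assoc,
    Finset.prod_mul_distrib, Finsupp.degree_apply, Finset.prod_pow_eq_pow_sum]

lemma coeff_restrictLine (u : σ → R) (p : MvPolynomial σ R) (k : ℕ) :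
    (restrictLine u p).coeff k = eval u (homogeneousComponent k p) := by
  induction p using MvPolynomial.induction_on' with
  | monomial m c =>
    rw [restrictLine_monomial, Polynomial.coeff_C_mul_X_pow,
      homogeneousComponent_of_mem (isHomogeneous_monomial c rfl)]
    split_ifs <;> simp_all
  | add p q hp hq => simp only [map_add, Polynomial.coeff_add, hp, hq]

lemma natDegree_restrictLine {u : σ → R} {p : MvPolynomial σ R}
    (hu : eval u (homogeneousComponent p.totalDegree p) ≠ 0) :
    (restrictLine u p).natDegree = p.totalDegree := by
  refine le_antisymm (Polynomial.natDegree_le_iff_coeff_eq_zero.2 fun k hk => ?_)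
    (Polynomial.le_natDegree_of_ne_zero (by rwa [coeff_restrictLine]))
  rw [coeff_restrictLine, homogeneousComponent_eq_zero k p (mod_cast hk), map_zero]

end MvPolynomial

namespace Polynomial

variable {𝕜 : Type*} [NormedField 𝕜] [LinearOrder 𝕜] [IsStrictOrderedRing 𝕜] [OrderTopology 𝕜]

lemma eventually_eval_mul_eval_neg_neg {q : 𝕜[X]} (hq : Odd q.natDegree) :
    ∀ᶠ t in atTop, q.eval t * q.eval (-t) < 0 := by
  -- `q(t) q(-t)` is a polynomial in `t` with leading coefficient `-lc(q)²`.
  have hq0 : q ≠ 0 := by rintro rfl; simp at hq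
  have hX : (-X : 𝕜[X]).natDegree = 1 := by simp
  have hlc : (q.comp (-X)).leadingCoeff = -q.leadingCoeff := by
    rw [leadingCoeff_comp (by simp [hX])]
    simp [hq.neg_one_pow]
  have hcomp0 : q.comp (-X) ≠ 0 := by
    rw [← leadingCoeff_ne_zero, hlc, neg_ne_zero, leadingCoeff_ne_zero]
    exact hq0
  have hdeg : 0 < (q * q.comp (-X)).degree := by
    rw [degree_mul, degree_eq_natDegree hq0, degree_eq_natDegree hcomp0]
    exact_mod_cast hq.pos.trans_le (Nat.le_add_right _ _)
  have hneg : (q * q.comp (-X)).leadingCoeff ≤ 0 := by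
    rw [leadingCoeff_mul, hlc, mul_neg]
    exact neg_nonpos.2 (mul_self_nonneg _)
  filter_upwards [(tendsto_atBot_of_leadingCoeff_nonpos _ hdeg hneg).eventually_lt_atBot 0]
    with t ht
  simpa using ht

end Polynomial

lemma IsPreconnected.exists_eq_zero_of_mul_neg {X : Type*} [TopologicalSpace X] {s : Set X}
    (hs : IsPreconnected s) {f : X → ℝ} (hf : ContinuousOn f s) {a b : X} (ha : a ∈ s)
    (hb : b ∈ s) (hab : f a * f b < 0) : ∃ z ∈ s, f z = 0 := by
  rcases mul_neg_iff.1 hab with ⟨hfa, hfb⟩ | ⟨hfa, hfb⟩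
  · exact hs.intermediate_value hb ha hf ⟨hfb.le, hfa.le⟩
  · exact hs.intermediate_value ha hb hf ⟨hfa.le, hfb.le⟩

lemma not_isBounded_setOf_eq_zero_of_eventually_mul_neg {E : Type*} [NormedAddCommGroup E]
    [NormedSpace ℝ E] (hE : 1 < Module.rank ℝ E) {f : E → ℝ} (hf : Continuous f) {u : E}
    (h : ∀ᶠ t : ℝ in atTop, f (t • u) * f (-(t • u)) < 0) : ¬ IsBounded {x | f x = 0} := by
  intro hbdd
  obtain ⟨M, hM⟩ := isBounded_iff_forall_norm_le.1 hbdd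
  have hu : u ≠ 0 := by
    rintro rfl
    obtain ⟨t, ht⟩ := h.exists
    simp only [smul_zero, neg_zero] at ht
    exact (mul_self_nonneg _).not_gt ht
  have hfar : ∀ᶠ t : ℝ in atTop, M < ‖t • u‖ := by
    simp_rw [norm_smul]
    exact (tendsto_norm_atTop_atTop.atTop_mul_const (norm_pos_iff.2 hu)).eventually_gt_atTop M
  obtain ⟨t, hsign, htM⟩ := (h.and hfar).exists
  obtain ⟨z, hz, hz0⟩ := (isPreconnected_sphere hE 0 ‖t • u‖).exists_eq_zero_of_mul_neg
    hf.continuousOn (by simp) (by simp) hsign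
  rw [mem_sphere_zero_iff_norm] at hz
  exact (hM z hz0).not_gt (hz ▸ htM)

theorem odd_totalDegree_zero_set_unbounded
    (p : MvPolynomial (Fin 2) ℝ) (hp : Odd p.totalDegree) :
    ¬ Bornology.IsBounded {x : Fin 2 → ℝ | eval x p = 0} := by
  have hp0 : p ≠ 0 := by rintro rfl; simp at hp
  obtain ⟨u, hu⟩ : ∃ u, eval u (homogeneousComponent p.totalDegree p) ≠ 0 := by
    by_contra! h
    exact homogeneousComponent_totalDegree_ne_zero hp0 (MvPolynomial.funext fun x => by simp [h])
  have hline := natDegree_restrictLine hu ▸ hp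
  refine not_isBounded_setOf_eq_zero_of_eventually_mul_neg (by simp) (continuous_eval p) (u := u) ?_
  filter_upwards [Polynomial.eventually_eval_mul_eval_neg_neg hline] with t ht
  simpa [eval_restrictLine, neg_smul] using ht
end

section
/- Let U ⊆ ℂ be open and connected, m n : ℕ, and let M : ℂ → Matrix (Fin m) (Fin n) ℂ be such that every entry function μ ↦ M μ i j is analytic on U (AnalyticOnNhd ℂ). Let v : Fin n → ℂ be nonzero with M μ *ᵥ v = 0 for all μ ∈ U, and suppose there exists μ₀ ∈ U such that the kernel {w : Fin n → ℂ | M μ₀ *ᵥ w = 0} equals the one-dimensional subspace Submodule.span ℂ {v} (as a set). Then for every μ ∈ U, eventually for ν in the punctured neighborhood filter 𝓝[≠] μ, the kernel {w | M ν *ᵥ w = 0} equals Submodule.span ℂ {v}; i.e., except for a set with no accumulation point in U, the kernel of M μ is exactly the line spanned by v. -/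
/-!
Pick `k` with `v k ≠ 0` and append the row `e_k` to `M μ`. Since `M μ *ᵥ v = 0`, the kernel of
`M μ` is the line through `v` exactly when the augmented matrix `N μ` has trivial kernel. At `μ₀`
this gives a left inverse `B` of `N μ₀`; then `μ ↦ det (B * N μ)` is analytic on `U` and equals
`1` at `μ₀`, so by the identity theorem its zeros are isolated in `U`, and away from them `N μ`
has trivial kernel.
-/

open Matrix Topology

section LinearAlgebra

variable {K : Type*} [Field K] {ι κ : Type*} [Fintype κ] [DecidableEq κ]

theorem Matrix.exists_left_inverse_of_forall_mulVec_eq_zero_imp [Fintype ι] [DecidableEq ι]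
    {A : Matrix ι κ K} (hA : ∀ w, A *ᵥ w = 0 → w = 0) : ∃ B : Matrix κ ι K, B * A = 1 := by
  obtain ⟨g, hg⟩ := A.mulVecLin.exists_leftInverse_of_injective (ker_mulVecLin_eq_bot_iff.2 hA)
  refine ⟨LinearMap.toMatrix' g, ?_⟩
  rw [← LinearMap.toMatrix'_toLin' A, ← LinearMap.toMatrix'_comp, Matrix.toLin'_apply', hg,
    LinearMap.toMatrix'_id]

theorem Matrix.fromRows_replicateRow_single_mulVec_eq_zero_iff (M : Matrix ι κ K) (k : κ)
    (w : κ → K) :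
    M.fromRows (replicateRow Unit (Pi.single k 1)) *ᵥ w = 0 ↔ M *ᵥ w = 0 ∧ w k = 0 := by
  rw [fromRows_mulVec, replicateRow_mulVec_eq_const, single_one_dotProduct, ← Sum.elim_zero_zero,
    Sum.elim_eq_iff, funext_iff]
  simp

theorem Matrix.setOf_mulVec_eq_zero_eq_span_iff {M : Matrix ι κ K} {v : κ → K}
    (hMv : M *ᵥ v = 0) {k : κ} (hk : v k ≠ 0) :
    {w | M *ᵥ w = 0} = (Submodule.span K {v} : Set (κ → K)) ↔
      ∀ w, M.fromRows (replicateRow Unit (Pi.single k 1)) *ᵥ w = 0 → w = 0 := by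
  simp only [fromRows_replicateRow_single_mulVec_eq_zero_iff]
  constructor
  · rintro hker w ⟨hMw, hwk⟩
    obtain ⟨c, rfl⟩ := Submodule.mem_span_singleton.1 (hker.le hMw)
    simp_all
  · intro hinj
    ext w
    simp only [Set.mem_ofPred_eq, SetLike.mem_coe, Submodule.mem_span_singleton]
    refine ⟨fun hMw => ⟨w k / v k, ?_⟩, ?_⟩
    · have := hinj (w - (w k / v k) • v)
        ⟨by simp [mulVec_sub, mulVec_smul, hMw, hMv], by simp [hk]⟩
      exact (sub_eq_zero.1 this).symm
    · rintro ⟨c, rfl⟩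
      rw [mulVec_smul, hMv, smul_zero]

end LinearAlgebra

section Analytic

variable {𝕜 : Type*} [NontriviallyNormedField 𝕜] {U : Set 𝕜} {ι κ : Type*}

theorem Matrix.analyticOnNhd_mul_apply {ι' : Type*} [Fintype ι] (B : Matrix ι' ι 𝕜)
    {A : 𝕜 → Matrix ι κ 𝕜} (hA : ∀ i j, AnalyticOnNhd 𝕜 (fun z => A z i j) U)
    (i : ι') (j : κ) : AnalyticOnNhd 𝕜 (fun z => (B * A z) i j) U := by
  simp only [mul_apply]
  exact Finset.analyticOnNhd_fun_sum _ fun l _ => analyticOnNhd_const.mul (hA l j)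

theorem Matrix.analyticOnNhd_det [Fintype κ] [DecidableEq κ] {A : 𝕜 → Matrix κ κ 𝕜}
    (hA : ∀ i j, AnalyticOnNhd 𝕜 (fun z => A z i j) U) :
    AnalyticOnNhd 𝕜 (fun z => (A z).det) U := by
  simp only [det_apply']
  exact Finset.analyticOnNhd_fun_sum _ fun σ _ =>
    analyticOnNhd_const.mul (Finset.analyticOnNhd_fun_prod _ fun i _ => hA (σ i) i)

theorem Matrix.eventually_forall_mulVec_eq_zero_imp_of_analyticOnNhd
    [Fintype ι] [DecidableEq ι] [Fintype κ] [DecidableEq κ] {A : 𝕜 → Matrix ι κ 𝕜}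
    (hA : ∀ i j, AnalyticOnNhd 𝕜 (fun z => A z i j) U) (hU : IsPreconnected U)
    {z₀ : 𝕜} (hz₀ : z₀ ∈ U) (h₀ : ∀ w, A z₀ *ᵥ w = 0 → w = 0) {z : 𝕜} (hz : z ∈ U) :
    ∀ᶠ ζ in 𝓝[≠] z, ∀ w, A ζ *ᵥ w = 0 → w = 0 := by
  obtain ⟨B, hB⟩ := exists_left_inverse_of_forall_mulVec_eq_zero_imp h₀
  have hdet := analyticOnNhd_det (analyticOnNhd_mul_apply B hA)
  rcases (hdet z hz).eventually_eq_zero_or_eventually_ne_zero with hzero | hne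
  · have := hdet.eqOn_zero_of_preconnected_of_eventuallyEq_zero hU hz hzero hz₀
    simp [hB] at this
  · filter_upwards [hne] with ζ hζ w hw
    exact mulVec_injective_of_det_ne_zero hζ <| by
      rw [← mulVec_mulVec, hw, mulVec_zero, mulVec_zero]

end Analytic

theorem kernel_generically_one_dimensional
    (U : Set ℂ) (hU : IsOpen U) (hUconn : IsConnected U)
    (m n : ℕ) (M : ℂ → Matrix (Fin m) (Fin n) ℂ)
    (hM : ∀ i j, AnalyticOnNhd ℂ (fun μ => M μ i j) U)
    (v : Fin n → ℂ) (hv : v ≠ 0)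
    (hMv : ∀ μ ∈ U, M μ *ᵥ v = 0)
    (μ₀ : ℂ) (hμ₀ : μ₀ ∈ U)
    (hker : {w : Fin n → ℂ | M μ₀ *ᵥ w = 0} = (Submodule.span ℂ {v} : Set (Fin n → ℂ))) :
    ∀ μ ∈ U, ∀ᶠ ν in nhdsWithin μ {μ}ᶜ,
      {w : Fin n → ℂ | M ν *ᵥ w = 0} = (Submodule.span ℂ {v} : Set (Fin n → ℂ)) := by
  intro μ hμ
  obtain ⟨k, hk⟩ := Function.ne_iff.mp hv
  let N μ := (M μ).fromRows (replicateRow Unit (Pi.single k (1 : ℂ)))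
  have hN : ∀ i j, AnalyticOnNhd ℂ (fun μ => N μ i j) U := by
    rintro (i | i) j
    exacts [hM i j, analyticOnNhd_const]
  have hN₀ := (setOf_mulVec_eq_zero_eq_span_iff (hMv μ₀ hμ₀) hk).1 hker
  filter_upwards [eventually_forall_mulVec_eq_zero_imp_of_analyticOnNhd hN
      hUconn.isPreconnected hμ₀ hN₀ hμ,
    eventually_nhdsWithin_of_eventually_nhds (hU.eventually_mem hμ)] with ν hNν hν
  exact (setOf_mulVec_eq_zero_eq_span_iff (hMv ν hν) hk).2 hNν
end

section
/- Let k ≥ 1 and let c : Fin k → EuclideanSpace ℝ (Fin 2) be an injective family of k mutually distinct points. Then there exists r₀ > 0 such that for every r with 0 < r < r₀, the lemniscate L_r = {x : EuclideanSpace ℝ (Fin 2) | ∏ j, ‖x − c j‖^2 = r} is a nonempty compact set whose space of connected components has exactly k elements, i.e., Nat.card (ConnectedComponents ↥L_r) = k. -/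
/-!
Near a pole `c j` the function `f x = ∏ i, ‖x - c i‖ ^ 2` factors as `‖x - c j‖ ^ 2 * g x` with `g`
smooth and positive at `c j`, so for small `ε > 0` it is strictly increasing along every ray of
length `ε` issuing from a pole, and the closed `ε`-balls about the poles are disjoint. Outside
these balls `f ≥ ε ^ (2k)`, so for `0 < r < ε ^ (2k)` the level set `L_r` lies in their union.
Inside the ball about `c j`, radial projection onto the unit circle is a continuous bijection
(monotonicity along rays and the intermediate value theorem) from the compact piece of `L_r` onto
the circle, hence a homeomorphism, and the piece is connected. The `k` pieces are closed, disjoint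
and cover `L_r`, so they are clopen in `L_r` and are exactly its connected components.
-/

open Finset Set Metric Filter Topology Function
open scoped NNReal

theorem natCard_connectedComponents_eq_of_isClosed_partition {X ι : Type*} [TopologicalSpace X]
    [Finite ι] {P : ι → Set X} (hclosed : ∀ i, IsClosed (P i))
    (hconn : ∀ i, IsPreconnected (P i)) (hne : ∀ i, (P i).Nonempty)
    (hcover : ∀ x, ∃ i, x ∈ P i) (hdisj : Pairwise (Disjoint on P)) :
    Nat.card (ConnectedComponents X) = Nat.card ι := by
  have hcompl : ∀ i, (P i)ᶜ = ⋃ (j) (_ : j ≠ i), P j := by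
    intro i
    ext x
    obtain ⟨j, hj⟩ := hcover x
    simp only [mem_compl_iff, mem_iUnion, exists_prop]
    refine ⟨fun hx => ⟨j, fun h => hx (h ▸ hj), hj⟩, ?_⟩
    rintro ⟨j, hji, hxj⟩ hxi
    exact disjoint_left.1 (hdisj hji) hxj hxi
  have hclopen : ∀ i, IsClopen (P i) := fun i =>
    ⟨hclosed i, isClosed_compl_iff.1 (by
      rw [hcompl]
      exact isClosed_iUnion_of_finite fun j => isClosed_iUnion_of_finite fun _ => hclosed j)⟩
  have hcomponent : ∀ i, ∀ x ∈ P i, connectedComponent x = P i := fun i x hx =>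
    ((hclopen i).connectedComponent_subset hx).antisymm ((hconn i).subset_connectedComponent hx)
  choose x hx using hne
  refine (Nat.card_eq_of_bijective (fun i => (x i : ConnectedComponents X)) ⟨?_, ?_⟩).symm
  · intro i j hij
    rw [ConnectedComponents.coe_eq_coe, hcomponent i _ (hx i), hcomponent j _ (hx j)] at hij
    by_contra hneq
    exact disjoint_left.1 (hdisj hneq) (hx i) (hij ▸ hx i)
  · rintro ⟨y⟩
    obtain ⟨i, hi⟩ := hcover y
    exact ⟨i, ConnectedComponents.coe_eq_coe.2
      ((hcomponent i _ (hx i)).trans (hcomponent i _ hi).symm)⟩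

theorem strictMonoOn_sq_mul_of_lipschitzOnWith {φ : ℝ → ℝ} {ε m : ℝ} {K : ℝ≥0}
    (hm : ∀ t ∈ Icc 0 ε, m ≤ φ t) (hφ : LipschitzOnWith K φ (Icc 0 ε)) (hεK : ε * K < m) :
    StrictMonoOn (fun t => t ^ 2 * φ t) (Icc 0 ε) := by
  intro s hs t ht hst
  have hlip : φ s - φ t ≤ K * (t - s) := by
    have h := hφ.dist_le_mul s hs t ht
    rw [Real.dist_eq, Real.dist_eq, abs_of_neg (sub_neg.2 hst)] at h
    linarith [le_abs_self (φ s - φ t)]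
  have hK : s ^ 2 * K ≤ s * m := by
    have : s * K ≤ ε * K := mul_le_mul_of_nonneg_right hs.2 K.2
    nlinarith [hs.1]
  -- t²φ(t) - s²φ(s) = (t² - s²) φ(t) + s² (φ(t) - φ(s)) ≥ (t - s) ((t + s) m - s² K) ≥ (t - s) t m
  have hm0 : 0 < m := lt_of_le_of_lt (mul_nonneg (hs.1.trans (hst.le.trans ht.2)) K.2) hεK
  have ht0 : 0 < t := hs.1.trans_lt hst
  have hts : 0 < t - s := sub_pos.2 hst
  nlinarith [mul_le_mul_of_nonneg_left hlip (sq_nonneg s), mul_pos (mul_pos ht0 hm0) hts,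
    mul_le_mul_of_nonneg_left (hm t ht) (mul_nonneg (add_pos_of_pos_of_nonneg ht0 hs.1).le hts.le),
    mul_le_mul_of_nonneg_right hK hts.le]

section Rays

variable {E : Type*} [NormedAddCommGroup E] [NormedSpace ℝ E]

theorem exists_mem_Ioc_apply_add_smul_eq {F : E → ℝ} (hF : Continuous F) {a u : E} {ε r : ℝ}
    (hε : 0 ≤ ε) (ha : F a < r) (hr : r ≤ F (a + ε • u)) :
    ∃ t ∈ Ioc 0 ε, F (a + t • u) = r := by
  obtain ⟨t, ht, htr⟩ := intermediate_value_Icc hε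
    (f := fun t : ℝ => F (a + t • u)) (by fun_prop) ⟨by simpa using ha.le, hr⟩
  refine ⟨t, ⟨ht.1.lt_of_ne ?_, ht.2⟩, htr⟩
  rintro rfl
  simp only [zero_smul, add_zero] at htr
  exact ha.ne htr

theorem isConnected_levelSet_inter_closedBall [ProperSpace E] (hE : 1 < Module.rank ℝ E)
    {F : E → ℝ} (hF : Continuous F) {a : E} {ε r : ℝ} (hε : 0 ≤ ε)
    (hmono : ∀ u ∈ sphere (0 : E) 1, StrictMonoOn (fun t => F (a + t • u)) (Icc 0 ε))
    (ha : F a < r) (hr : ∀ u ∈ sphere (0 : E) 1, r ≤ F (a + ε • u)) :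
    IsConnected ({x | F x = r} ∩ closedBall a ε) := by
  set S := {x | F x = r} ∩ closedBall a ε
  have hS : IsCompact S := (isCompact_closedBall a ε).inter_left (isClosed_eq hF continuous_const)
  have : CompactSpace S := isCompact_iff_compactSpace.1 hS
  have hne : ∀ x : S, (x : E) - a ≠ 0 := fun x h => ha.ne (sub_eq_zero.1 h ▸ x.2.1)
  set π : S → E := fun x => ‖(x : E) - a‖⁻¹ • ((x : E) - a)
  have hπ : Continuous π := by
    have hsub : Continuous fun x : S => (x : E) - a := continuous_subtype_val.sub continuous_const
    exact (hsub.norm.inv₀ fun x => norm_ne_zero_iff.2 (hne x)).smul hsub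
  have hπ_sphere : ∀ x, π x ∈ sphere (0 : E) 1 := fun x => by
    simpa [π] using norm_smul_inv_norm (𝕜 := ℝ) (hne x)
  have hπ_eq : ∀ x : S, (x : E) = a + ‖(x : E) - a‖ • π x := fun x => by
    simp [π, smul_smul, mul_inv_cancel₀ (norm_ne_zero_iff.2 (hne x))]
  have hinj : Injective π := by
    intro x y hxy
    have hnorm : ‖(x : E) - a‖ = ‖(y : E) - a‖ := by
      refine (hmono _ (hπ_sphere y)).injOn ⟨norm_nonneg _, ?_⟩ ⟨norm_nonneg _, ?_⟩ ?_
      · simpa [dist_eq_norm] using x.2.2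
      · simpa [dist_eq_norm] using y.2.2
      · rw [← hπ_eq y, ← hxy, ← hπ_eq x]
        exact x.2.1.trans y.2.1.symm
    exact Subtype.ext (by rw [hπ_eq x, hπ_eq y, hxy, hnorm])
  have hsurj : sphere (0 : E) 1 ⊆ range π := by
    intro u hu
    obtain ⟨t, ht, htr⟩ := exists_mem_Ioc_apply_add_smul_eq hF hε ha (hr u hu)
    have hu1 : ‖u‖ = 1 := mem_sphere_zero_iff_norm.1 hu
    have hdist : ‖a + t • u - a‖ = t := by simp [norm_smul, hu1, abs_of_pos ht.1]
    refine ⟨⟨a + t • u, htr, by rw [mem_closedBall_iff_norm, hdist]; exact ht.2⟩, ?_⟩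
    simp only [π, hdist]
    rw [add_sub_cancel_left, smul_smul, inv_mul_cancel₀ ht.1.ne', one_smul]
  have hconn := (isConnected_sphere hE 0 zero_le_one).preimage_of_isClosedMap hinj
    hπ.isClosedMap hsurj
  rw [show π ⁻¹' sphere 0 1 = univ from eq_univ_of_forall hπ_sphere] at hconn
  exact isConnected_iff_connectedSpace.2 (connectedSpace_iff_univ.2 hconn)

theorem eventually_strictMonoOn_sq_mul_of_lipschitzOnWith {g : E → ℝ} {a : E} {K : ℝ≥0}
    {U : Set E} (hU : U ∈ 𝓝 a) (hg : LipschitzOnWith K g U) (ha : 0 < g a) :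
    ∀ᶠ ε in 𝓝[>] (0 : ℝ), ∀ u ∈ sphere (0 : E) 1,
      StrictMonoOn (fun t => t ^ 2 * g (a + t • u)) (Icc 0 ε) := by
  obtain ⟨ρ, hρ, hball⟩ : ∃ ρ > 0, ball a ρ ⊆ U ∩ {x | g a / 2 < g x} :=
    Metric.mem_nhds_iff.1 (inter_mem hU
      ((hg.continuousOn.continuousAt hU).eventually (lt_mem_nhds (half_lt_self ha))))
  have hsmall : ∀ᶠ ε in 𝓝 (0 : ℝ), ε < ρ ∧ ε * K < g a / 2 := by
    refine (eventually_lt_nhds hρ).and ?_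
    have : Tendsto (fun ε : ℝ => ε * K) (𝓝 0) (𝓝 0) := by
      simpa using (continuous_id.mul continuous_const).tendsto (0 : ℝ) (f := fun ε : ℝ => ε * K)
    exact this.eventually (eventually_lt_nhds (half_pos ha))
  filter_upwards [nhdsWithin_le_nhds hsmall] with ε ⟨hερ, hεK⟩ u hu
  have hu1 : ‖u‖ = 1 := mem_sphere_zero_iff_norm.1 hu
  have hray : MapsTo (fun t : ℝ => a + t • u) (Icc 0 ε) (ball a ρ) := fun t ht => by
    rw [mem_ball_iff_norm, add_sub_cancel_left, norm_smul, hu1, mul_one, Real.norm_eq_abs,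
      abs_of_nonneg ht.1]
    exact ht.2.trans_lt hερ
  have hlip : LipschitzWith 1 fun t : ℝ => a + t • u :=
    LipschitzWith.of_dist_le_mul fun s t => by
      simp [dist_eq_norm, ← sub_smul, norm_smul, hu1]
  refine strictMonoOn_sq_mul_of_lipschitzOnWith (fun t ht => (hball (hray ht)).2.le) ?_ hεK
  rw [← mul_one K]
  exact hg.comp hlip.lipschitzOnWith (hray.mono_right fun x hx => (hball hx).1)

end Rays

section Lemniscate

variable {ι E : Type*} [NormedAddCommGroup E]

def lemniscate [Fintype ι] (c : ι → E) (r : ℝ) : Set E := {x | ∏ i, ‖x - c i‖ ^ 2 = r}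

theorem pow_card_le_prod_norm_sub_sq [Fintype ι] {c : ι → E} {x : E} {ε : ℝ} (hε : 0 ≤ ε)
    (h : ∀ i, ε ≤ ‖x - c i‖) : (ε ^ 2) ^ Fintype.card ι ≤ ∏ i, ‖x - c i‖ ^ 2 := by
  rw [← Finset.card_univ, ← Finset.prod_const]
  exact Finset.prod_le_prod (fun _ _ => by positivity) fun i _ => pow_le_pow_left₀ hε (h i) 2

theorem lemniscate_subset_iUnion_ball [Fintype ι] {c : ι → E} {ε r : ℝ} (hε : 0 ≤ ε)
    (hr : r < (ε ^ 2) ^ Fintype.card ι) : lemniscate c r ⊆ ⋃ i, ball (c i) ε := by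
  intro x hx
  by_contra h
  simp only [mem_iUnion, mem_ball, dist_eq_norm, not_exists, not_lt] at h
  exact hr.not_ge (hx ▸ pow_card_le_prod_norm_sub_sq hε h)

theorem isCompact_lemniscate [Fintype ι] [Nonempty ι] [ProperSpace E] (c : ι → E) (r : ℝ) :
    IsCompact (lemniscate c r) := by
  have hR : r < ((|r| + 1) ^ 2) ^ Fintype.card ι := calc
    r < |r| + 1 := (le_abs_self r).trans_lt (lt_add_one _)
    _ ≤ (|r| + 1) ^ 2 := le_self_pow₀ (by linarith [abs_nonneg r]) two_ne_zero
    _ ≤ _ := le_self_pow₀ (one_le_pow₀ (by linarith [abs_nonneg r])) Fintype.card_ne_zero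
  refine Metric.isCompact_of_isClosed_isBounded (isClosed_eq (by fun_prop) continuous_const) ?_
  exact (Bornology.isBounded_iUnion.2 fun i => isBounded_ball).subset
    (lemniscate_subset_iUnion_ball (by positivity) hR)

theorem le_norm_sub_of_mem_sphere {c : ι → E} {ε : ℝ}
    (hsep : Pairwise fun i j => 2 * ε < dist (c i) (c j)) {j : ι} {x : E}
    (hx : x ∈ sphere (c j) ε) (i : ι) : ε ≤ ‖x - c i‖ := by
  rw [mem_sphere] at hx
  rw [← dist_eq_norm]
  rcases eq_or_ne i j with rfl | hij
  · exact hx.ge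
  · linarith [hsep hij, dist_triangle (c i) x (c j), dist_comm (c i) x]

theorem isConnected_lemniscate_inter_closedBall [Fintype ι] [NormedSpace ℝ E] [ProperSpace E]
    (hE : 1 < Module.rank ℝ E) {c : ι → E} {ε r : ℝ} (hε : 0 ≤ ε)
    (hsep : Pairwise fun i j => 2 * ε < dist (c i) (c j)) {j : ι}
    (hmono : ∀ u ∈ sphere (0 : E) 1,
      StrictMonoOn (fun t => ∏ i, ‖c j + t • u - c i‖ ^ 2) (Icc 0 ε))
    (hr : 0 < r) (hrε : r ≤ (ε ^ 2) ^ Fintype.card ι) :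
    IsConnected (lemniscate c r ∩ closedBall (c j) ε) := by
  refine isConnected_levelSet_inter_closedBall hE (by fun_prop) hε hmono ?_ fun u hu => ?_
  · rwa [Finset.prod_eq_zero (mem_univ j) (by simp)]
  · have hx : c j + ε • u ∈ sphere (c j) ε := by
      simp [norm_smul, abs_of_nonneg hε, mem_sphere_zero_iff_norm.1 hu]
    exact hrε.trans (pow_card_le_prod_norm_sub_sq hε (le_norm_sub_of_mem_sphere hsep hx))

theorem natCard_connectedComponents_lemniscate [Fintype ι] [NormedSpace ℝ E] [ProperSpace E]
    (hE : 1 < Module.rank ℝ E) {c : ι → E} {ε r : ℝ} (hε : 0 ≤ ε)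
    (hsep : Pairwise fun i j => 2 * ε < dist (c i) (c j))
    (hmono : ∀ j, ∀ u ∈ sphere (0 : E) 1,
      StrictMonoOn (fun t => ∏ i, ‖c j + t • u - c i‖ ^ 2) (Icc 0 ε))
    (hr : 0 < r) (hrε : r < (ε ^ 2) ^ Fintype.card ι) :
    Nat.card (ConnectedComponents (lemniscate c r)) = Nat.card ι := by
  have hpiece j := isConnected_lemniscate_inter_closedBall hE hε hsep (hmono j) hr hrε.le
  refine natCard_connectedComponents_eq_of_isClosed_partition
    (P := fun j => ((↑) : lemniscate c r → E) ⁻¹' closedBall (c j) ε)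
    (fun j => isClosed_closedBall.preimage continuous_subtype_val) (fun j => ?_) (fun j => ?_)
    (fun x => ?_) (fun i j hij => ?_)
  · rw [← IsInducing.subtypeVal.isPreconnected_image, Subtype.image_preimage_coe]
    exact (hpiece j).isPreconnected
  · obtain ⟨x, hx, hxj⟩ := (hpiece j).nonempty
    exact ⟨⟨x, hx⟩, hxj⟩
  · obtain ⟨j, hj⟩ := mem_iUnion.1 (lemniscate_subset_iUnion_ball hε hrε x.2)
    exact ⟨j, ball_subset_closedBall hj⟩
  · exact (closedBall_disjoint_closedBall (by linarith [hsep hij])).preimage _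

theorem eventually_pairwise_two_mul_lt_dist {X : Type*} [MetricSpace X] [Finite ι] {c : ι → X}
    (hc : Injective c) : ∀ᶠ ε in 𝓝 (0 : ℝ), Pairwise fun i j => 2 * ε < dist (c i) (c j) := by
  have h : ∀ i j, ∀ᶠ ε in 𝓝 (0 : ℝ), i ≠ j → 2 * ε < dist (c i) (c j) := by
    intro i j
    rcases eq_or_ne i j with rfl | hij
    · exact .of_forall fun _ h => absurd rfl h
    · filter_upwards [eventually_lt_nhds (half_pos (dist_pos.2 (hc.ne hij)))] with ε hε _
      linarith
  filter_upwards [eventually_all.2 fun i => eventually_all.2 (h i)] with ε hε i j hij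
  exact hε i j hij

theorem eventually_strictMonoOn_prod_norm_sub_sq [Fintype ι] [InnerProductSpace ℝ E]
    {c : ι → E} (hc : Injective c) (j : ι) :
    ∀ᶠ ε in 𝓝[>] (0 : ℝ), ∀ u ∈ sphere (0 : E) 1,
      StrictMonoOn (fun t => ∏ i, ‖c j + t • u - c i‖ ^ 2) (Icc 0 ε) := by
  classical
  set g : E → ℝ := fun x => ∏ i ∈ univ.erase j, ‖x - c i‖ ^ 2
  have hg : ContDiff ℝ 1 g := contDiff_prod fun i _ => (contDiff_id.sub contDiff_const).norm_sq ℝ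
  have hgj : 0 < g (c j) := prod_pos fun i hi =>
    pow_pos (norm_pos_iff.2 (sub_ne_zero.2 (hc.ne (ne_of_mem_erase hi).symm))) 2
  obtain ⟨K, U, hU, hK⟩ := hg.locallyLipschitz (c j)
  filter_upwards [eventually_strictMonoOn_sq_mul_of_lipschitzOnWith hU hK hgj] with ε hε u hu
  convert hε u hu using 2 with t
  rw [← mul_prod_erase univ _ (mem_univ j)]
  simp [g, norm_smul, mem_sphere_zero_iff_norm.1 hu]

end Lemniscate

theorem lemniscate_components
    (k : ℕ) (hk : 1 ≤ k)
    (c : Fin k → EuclideanSpace ℝ (Fin 2)) (hc : Function.Injective c) :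
    ∃ r₀ : ℝ, 0 < r₀ ∧ ∀ r : ℝ, 0 < r → r < r₀ →
      ({x : EuclideanSpace ℝ (Fin 2) | ∏ j, ‖x - c j‖ ^ 2 = r}).Nonempty ∧
      IsCompact {x : EuclideanSpace ℝ (Fin 2) | ∏ j, ‖x - c j‖ ^ 2 = r} ∧
      Nat.card
        (ConnectedComponents
          {x : EuclideanSpace ℝ (Fin 2) | ∏ j, ‖x - c j‖ ^ 2 = r}) = k := by
  have : Nonempty (Fin k) := ⟨⟨0, hk⟩⟩
  have hE : 1 < Module.rank ℝ (EuclideanSpace ℝ (Fin 2)) := by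
    rw [← Module.finrank_eq_rank, finrank_euclideanSpace_fin]
    norm_num
  obtain ⟨ε, hε, hsep, hmono⟩ := (eventually_mem_nhdsWithin.and
    (((eventually_pairwise_two_mul_lt_dist hc).filter_mono nhdsWithin_le_nhds).and
      (eventually_all.2 fun j => eventually_strictMonoOn_prod_norm_sub_sq hc j))).exists
  have hε : 0 < ε := hε
  refine ⟨(ε ^ 2) ^ k, by positivity, fun r hr hrε => ?_⟩
  rw [← Fintype.card_fin k] at hrε
  have hpiece := isConnected_lemniscate_inter_closedBall hE hε.le hsep (hmono ⟨0, hk⟩) hr hrε.le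
  refine ⟨hpiece.nonempty.mono inter_subset_left, isCompact_lemniscate c r, ?_⟩
  exact (natCard_connectedComponents_lemniscate hE hε.le hsep hmono hr hrε).trans (Nat.card_fin k)
end

section
/- Let μ be a finite Borel measure on Fin 2 → ℝ, let S ⊆ (Fin 2 → ℝ) be compact with μ(Sᶜ) = 0 and such that μ(V) > 0 for every open set V with V ∩ S nonempty (i.e., S is the support of μ). Let g : MvPolynomial (Fin 2) ℝ satisfy MvPolynomial.vanishingIdeal S = Ideal.span {g}, and let w : (Fin 2 → ℝ) → ℝ be continuous with w x > 0 for all x ∈ S. Let p : MvPolynomial (Fin 2) ℝ with totalDegree p ≤ totalDegree g, and suppose that for every q : MvPolynomial (Fin 2) ℝ with totalDegree q ≤ totalDegree g one has ∫ x, w x * (eval x q) * (eval x p) ∂μ = 0. Then there exists a real constant c such that p = MvPolynomial.C c * g. -/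
/-!
Taking `q = p` in the orthogonality relations, the integral of the continuous function
`w p²`, which is nonnegative on the support `S`, vanishes; hence `w p²` is zero almost
everywhere, and since every open set meeting `S` has positive mass, it is zero on all of `S`.
As `w > 0` there, `p` lies in the vanishing ideal of `S`, so `g ∣ p`, and the degree bound
`deg p ≤ deg g` forces the cofactor to be a constant.
-/

open MvPolynomial MeasureTheory

namespace MeasureTheory

variable {X : Type*} [TopologicalSpace X] [MeasurableSpace X] {μ : Measure X} {S : Set X}

theorem eqOn_of_ae_eq_of_forall_isOpen_inter_nonempty {Y : Type*} [TopologicalSpace Y]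
    [T2Space Y] (hsupp : ∀ V : Set X, IsOpen V → (V ∩ S).Nonempty → 0 < μ V)
    {f g : X → Y} (hf : Continuous f) (hg : Continuous g) (hfg : f =ᵐ[μ] g) :
    Set.EqOn f g S := by
  intro x hx
  by_contra hne
  have hnull : μ {y | f y ≠ g y} = 0 := ae_iff.mp hfg
  exact (hsupp _ (isOpen_ne_fun hf hg) ⟨x, hne, hx⟩).ne' hnull

theorem integrable_of_ae_mem_isCompact [OpensMeasurableSpace X] [T2Space X] [IsFiniteMeasure μ] (hS : IsCompact S)
    (hμS : ∀ᵐ x ∂μ, x ∈ S) {f : X → ℝ} (hf : Continuous f) : Integrable f μ := by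
  simpa only [IntegrableOn, Measure.restrict_eq_self_of_ae_mem hμS] using
    hf.continuousOn.integrableOn_compact (μ := μ) hS

theorem eqOn_zero_of_integral_eq_zero [OpensMeasurableSpace X] [T2Space X] [IsFiniteMeasure μ] (hS : IsCompact S)
    (hμS : ∀ᵐ x ∂μ, x ∈ S) (hsupp : ∀ V : Set X, IsOpen V → (V ∩ S).Nonempty → 0 < μ V)
    {f : X → ℝ} (hf : Continuous f) (hf_nonneg : ∀ x ∈ S, 0 ≤ f x)
    (hf_int : ∫ x, f x ∂μ = 0) : Set.EqOn f 0 S := by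
  have hf_ae_nonneg : 0 ≤ᵐ[μ] f := hμS.mono hf_nonneg
  have hf_ae_zero : f =ᵐ[μ] 0 :=
    (integral_eq_zero_iff_of_nonneg_ae hf_ae_nonneg
      (integrable_of_ae_mem_isCompact hS hμS hf)).mp hf_int
  exact eqOn_of_ae_eq_of_forall_isOpen_inter_nonempty hsupp hf continuous_const hf_ae_zero

end MeasureTheory

namespace MvPolynomial

theorem exists_eq_C_mul_of_dvd_of_totalDegree_le {σ R : Type*} [CommRing R] [IsDomain R]
    {p g : MvPolynomial σ R} (hdvd : g ∣ p) (hdeg : p.totalDegree ≤ g.totalDegree) :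
    ∃ c : R, p = C c * g := by
  obtain ⟨r, rfl⟩ := hdvd
  by_cases hrg : g * r = 0
  · exact ⟨0, by simpa using hrg⟩
  obtain ⟨hg, hr⟩ := mul_ne_zero_iff.mp hrg
  rw [totalDegree_mul_of_isDomain hg hr] at hdeg
  have hr_const : r = C (r.coeff 0) := totalDegree_eq_zero_iff_eq_C.mp (by omega)
  exact ⟨r.coeff 0, by rw [mul_comm, ← hr_const]⟩

end MvPolynomial

theorem kernel_characterization_measure_theoretic
    (μ : Measure (Fin 2 → ℝ)) [IsFiniteMeasure μ]
    (S : Set (Fin 2 → ℝ)) (hS : IsCompact S)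
    (hμS : μ Sᶜ = 0)
    (hsupp : ∀ V : Set (Fin 2 → ℝ), IsOpen V → (V ∩ S).Nonempty → 0 < μ V)
    (g : MvPolynomial (Fin 2) ℝ)
    (hg : vanishingIdeal ℝ S = Ideal.span {g})
    (w : (Fin 2 → ℝ) → ℝ) (hw : Continuous w) (hwpos : ∀ x ∈ S, 0 < w x)
    (p : MvPolynomial (Fin 2) ℝ) (hp : p.totalDegree ≤ g.totalDegree)
    (horth : ∀ q : MvPolynomial (Fin 2) ℝ, q.totalDegree ≤ g.totalDegree →
      ∫ x, w x * (eval x q) * (eval x p) ∂μ = 0) :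
    ∃ c : ℝ, p = C c * g := by
  have hweighted_sq_zero : Set.EqOn (fun x => w x * eval x p * eval x p) 0 S :=
    eqOn_zero_of_integral_eq_zero hS (ae_iff.mpr hμS) hsupp
      ((hw.mul (continuous_eval p)).mul (continuous_eval p))
      (fun x hx => by rw [mul_assoc]; exact mul_nonneg (hwpos x hx).le (mul_self_nonneg _))
      (horth p hp)
  have hp_vanishing : p ∈ vanishingIdeal ℝ S := fun x hx => by
    have h := hweighted_sq_zero hx
    simp only [Pi.zero_apply, mul_assoc, mul_eq_zero, (hwpos x hx).ne', or_self,
      false_or] at h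
    exact h
  rw [hg, Ideal.mem_span_singleton] at hp_vanishing
  exact exists_eq_C_mul_of_dvd_of_totalDegree_le hp_vanishing hp
end
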